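/- Let F be a free group with basis {a, b}, and for an integer o ≥ 2 let G = (ℤ/oℤ) ∗ ℤ be the quotient of F by the normal closure of a^o. If q : F → G is the quotient map, then scl_G(q([a,b])) ≤ 1/2 − 1/o. -/

import Mathlib

open scoped commutatorElement

/-- Commutator length: least `n` such that `w` is a product of `n` commutators. -/
noncomputable def cl {G : Type*} [Group G] (w : G) : ℕ :=
  sInf {n : ℕ | ∃ f g : Fin n → G, w = (List.ofFn fun i => ⁅f i, g i⁆).prod}

/-- Stable commutator length, defined as `inf_{n ≥ 1} cl(wⁿ)/n`. -/
noncomputable def scl {G : Type*} [Group G] (w : G) : ℝ :=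
  ⨅ n : ℕ+, (cl (w ^ (n : ℕ)) : ℝ) / (n : ℕ)

/-!
If `t ^ n = 1` and `u = ⁅t, v⁆`, then `u⁻¹` is a product of `n - 1` conjugates `xᵢ` of `u`
(a telescoping product, closed up by `t ^ n = 1`). For `M = 2k + 1` the element
`x ^ M * y ^ M * ((x * y) ^ M)⁻¹` is a product of `k` commutators, so `∏ xᵢ ^ M` is
`u ^ (-M)` up to `(n - 2) k` commutators. On the other hand each `xᵢ ^ M` is a conjugate of
`u ^ M`, so the same product is `u ^ ((n - 1) M)` up to `n - 1` commutators. Hence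
`cl (u ^ (n M)) ≤ (n - 2) k + n - 1`, and dividing by `n M` and letting `k → ∞` gives
`scl u ≤ (n - 2) / (2 n) = 1 / 2 - 1 / n`.
-/

section ProdOfCommutators

variable {G H : Type*} [Group G] [Group H]

def IsProdOfCommutators (k : ℕ) (g : G) : Prop :=
  ∃ l : List (G × G), l.length = k ∧ g = (l.map fun p => ⁅p.1, p.2⁆).prod

namespace IsProdOfCommutators

theorem one : IsProdOfCommutators 0 (1 : G) := ⟨[], rfl, rfl⟩

theorem commutator (a b : G) : IsProdOfCommutators 1 ⁅a, b⁆ := ⟨[(a, b)], rfl, by simp⟩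

theorem mul {k m : ℕ} {g h : G} (hg : IsProdOfCommutators k g) (hh : IsProdOfCommutators m h) :
    IsProdOfCommutators (k + m) (g * h) := by
  obtain ⟨l₁, rfl, rfl⟩ := hg
  obtain ⟨l₂, rfl, rfl⟩ := hh
  exact ⟨l₁ ++ l₂, List.length_append, by simp⟩

theorem map {k : ℕ} {g : G} (hg : IsProdOfCommutators k g) (f : G →* H) :
    IsProdOfCommutators k (f g) := by
  obtain ⟨l, rfl, rfl⟩ := hg
  exact ⟨l.map (Prod.map f f), List.length_map _,
    by simp [map_list_prod, Function.comp_def, map_commutatorElement]⟩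

theorem conj {k : ℕ} {g : G} (hg : IsProdOfCommutators k g) (x : G) :
    IsProdOfCommutators k (x * g * x⁻¹) :=
  hg.map (MulAut.conj x).toMonoidHom

theorem inv {k : ℕ} {g : G} (hg : IsProdOfCommutators k g) : IsProdOfCommutators k g⁻¹ := by
  obtain ⟨l, rfl, rfl⟩ := hg
  exact ⟨(l.map Prod.swap).reverse, by simp,
    by simp [List.prod_inv_reverse, commutatorElement_inv, Function.comp_def]⟩

theorem cl_le {k : ℕ} {g : G} (hg : IsProdOfCommutators k g) : cl g ≤ k := by
  obtain ⟨l, rfl, rfl⟩ := hg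
  refine Nat.sInf_le ⟨fun i => (l.get i).1, fun i => (l.get i).2, ?_⟩
  conv_lhs => rw [← List.ofFn_get l, List.map_ofFn]
  rfl

end IsProdOfCommutators

theorem isProdOfCommutators_pow_mul_pow_mul_inv (x y : G) (k : ℕ) :
    IsProdOfCommutators k (x ^ (2 * k + 1) * y ^ (2 * k + 1) * ((x * y) ^ (2 * k + 1))⁻¹) := by
  induction k with
  | zero => simpa using IsProdOfCommutators.one
  | succ k ih =>
    set M := 2 * k + 1
    have step : x ^ (M + 2) * y ^ (M + 2) * ((x * y) ^ (M + 2))⁻¹ =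
        x ^ M * ⁅x ^ 2 * y ^ (M + 1) * x⁻¹, y⁻¹ * x⁻¹ ^ 2⁆ * (x ^ M)⁻¹ *
          (x ^ M * y ^ M * ((x * y) ^ M)⁻¹) := by
      rw [pow_add x M 2, pow_add y M 2, pow_add (x * y) M 2, pow_two (x * y)]
      group
    rw [show 2 * (k + 1) + 1 = M + 2 by ring, step, Nat.add_comm k]
    exact ((IsProdOfCommutators.commutator _ _).conj _).mul ih

theorem exists_prod_map_pow_eq_mul_prod_pow (k : ℕ) (l : List G) :
    ∃ w : G, IsProdOfCommutators ((l.length - 1) * k) w ∧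
      (l.map (· ^ (2 * k + 1))).prod = w * l.prod ^ (2 * k + 1) := by
  induction l with
  | nil => exact ⟨1, by simpa using IsProdOfCommutators.one, by simp⟩
  | cons x l ih =>
    obtain ⟨w, hw, he⟩ := ih
    rcases l with _ | ⟨y, l⟩
    · exact ⟨1, by simpa using IsProdOfCommutators.one, by simp⟩
    set M := 2 * k + 1
    refine ⟨x ^ M * w * (x ^ M)⁻¹ *
      (x ^ M * (y :: l).prod ^ M * ((x * (y :: l).prod) ^ M)⁻¹), ?_, ?_⟩
    · have hlen : ((x :: y :: l).length - 1) * k = ((y :: l).length - 1) * k + k := by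
        simp [Nat.succ_mul]
      rw [hlen]
      exact (hw.conj _).mul (isProdOfCommutators_pow_mul_pow_mul_inv x _ k)
    · rw [List.map_cons, List.prod_cons, he, List.prod_cons (a := x)]
      group

theorem exists_prod_map_conj_eq_mul_pow (z : G) (L : List G) :
    ∃ w : G, IsProdOfCommutators L.length w ∧
      (L.map fun g => g * z * g⁻¹).prod = w * z ^ L.length := by
  induction L with
  | nil => exact ⟨1, IsProdOfCommutators.one, by simp⟩
  | cons g L ih =>
    obtain ⟨w, hw, he⟩ := ih
    refine ⟨⁅g, z⁆ * (z * w * z⁻¹), ?_, ?_⟩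
    · simpa [Nat.add_comm] using (IsProdOfCommutators.commutator g z).mul (hw.conj z)
    · rw [List.map_cons, List.prod_cons, he, List.length_cons, commutatorElement_def]
      group

theorem prod_map_conj_commutator_eq_inv (t v : G) (m : ℕ) (ht : t ^ (m + 2) = 1) :
    ((List.range (m + 1)).map fun i =>
      t⁻¹ ^ (i + 1) * ⁅t, v⁆ * (t⁻¹ ^ (i + 1))⁻¹).prod = ⁅t, v⁆⁻¹ := by
  have htelescope : (fun i => t⁻¹ ^ (i + 1) * ⁅t, v⁆ * (t⁻¹ ^ (i + 1))⁻¹) =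
      fun i => (t⁻¹ ^ i * v * (t⁻¹ ^ i)⁻¹) /
        (t⁻¹ ^ (i + 1) * v * (t⁻¹ ^ (i + 1))⁻¹) := by
    funext i
    simp only [pow_succ, commutatorElement_def, div_eq_mul_inv]
    group
  have hlast : t⁻¹ ^ (m + 1) = t := by
    have : t ^ (m + 1) * t = 1 := by rwa [← pow_succ]
    rw [inv_pow, eq_inv_of_mul_eq_one_left this, inv_inv]
  rw [htelescope, List.prod_range_div', hlast]
  simp only [commutatorElement_def, pow_zero, div_eq_mul_inv]
  group

theorem isProdOfCommutators_commutator_pow (t v : G) (m k : ℕ) (ht : t ^ (m + 2) = 1) :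
    IsProdOfCommutators (m * k + (m + 1)) (⁅t, v⁆ ^ ((m + 2) * (2 * k + 1))) := by
  have hprod := prod_map_conj_commutator_eq_inv t v m ht
  set u := ⁅t, v⁆
  set g : ℕ → G := fun i => t⁻¹ ^ (i + 1)
  set l := (List.range (m + 1)).map fun i => g i * u * (g i)⁻¹
  obtain ⟨w₁, hw₁, he₁⟩ := exists_prod_map_pow_eq_mul_prod_pow k l
  obtain ⟨w₂, hw₂, he₂⟩ :=
    exists_prod_map_conj_eq_mul_pow (u ^ (2 * k + 1)) ((List.range (m + 1)).map g)
  have hconj : ((List.range (m + 1)).map g).map (fun h => h * u ^ (2 * k + 1) * h⁻¹) =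
      l.map (· ^ (2 * k + 1)) := by
    simp only [l, List.map_map, Function.comp_def, conj_pow]
  rw [hconj, he₁, hprod, inv_pow] at he₂
  simp only [l, List.length_map, List.length_range, Nat.add_sub_cancel] at hw₁ hw₂ he₂
  have hpow : u ^ ((m + 2) * (2 * k + 1)) = w₂⁻¹ * w₁ := by
    rw [show (m + 2) * (2 * k + 1) = (2 * k + 1) * (m + 1) + (2 * k + 1) by ring, pow_add,
      pow_mul, eq_inv_mul_of_mul_eq he₂.symm]
    group
  rw [hpow, Nat.add_comm]
  exact hw₂.inv.mul hw₁

theorem scl_le_cl_pow_div (g : G) {N : ℕ} (hN : 0 < N) : scl g ≤ cl (g ^ N) / N :=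
  ciInf_le ⟨0, Set.forall_mem_range.2 fun _ => by positivity⟩ (⟨N, hN⟩ : ℕ+)

theorem scl_commutator_le_of_pow_eq_one (t v : G) {n : ℕ} (hn : 2 ≤ n) (ht : t ^ n = 1) :
    scl ⁅t, v⁆ ≤ 1 / 2 - 1 / (n : ℝ) := by
  obtain ⟨m, rfl⟩ : ∃ m, n = m + 2 := ⟨n - 2, by omega⟩
  have hk (k : ℕ) :
      scl ⁅t, v⁆ ≤ 1 / 2 - 1 / ((m + 2 : ℕ) : ℝ) + 1 / (2 * (2 * k + 1)) := by
    calc scl ⁅t, v⁆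
        ≤ cl (⁅t, v⁆ ^ ((m + 2) * (2 * k + 1))) / ((m + 2) * (2 * k + 1) : ℕ) :=
          scl_le_cl_pow_div _ (by positivity)
      _ ≤ (m * k + (m + 1) : ℕ) / ((m + 2) * (2 * k + 1) : ℕ) := by
          gcongr
          exact_mod_cast (isProdOfCommutators_commutator_pow t v m k ht).cl_le
      _ = _ := by
          push_cast
          field_simp
          ring
  refine le_of_forall_pos_le_add fun ε hε => ?_
  obtain ⟨k, hkε⟩ := exists_nat_one_div_lt hε
  have hle : 1 / (2 * (2 * k + 1) : ℝ) ≤ 1 / (k + 1) := by gcongr; linarith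
  linarith [hk k]

end ProdOfCommutators

theorem stmt_9 (o : ℕ) (ho : 2 ≤ o) :
    let F := FreeGroup Bool
    let a : F := FreeGroup.of true
    let b : F := FreeGroup.of false
    let N := Subgroup.normalClosure ({a ^ o} : Set F)
    let q := QuotientGroup.mk' N
    scl (q ⁅a, b⁆) ≤ 1 / 2 - 1 / (o : ℝ) := by
  intro F a b N q
  rw [map_commutatorElement]
  refine scl_commutator_le_of_pow_eq_one _ _ ho ?_
  rw [← map_pow, QuotientGroup.mk'_apply, QuotientGroup.eq_one_iff]
  exact Subgroup.subset_normalClosure rfl
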